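/- arXiv:2310.15996 — 7 statements merged into one kernel-verified Lean document; each statement's English description precedes it below -/
import Mathlib

section
/- The left half-plane H = {z ∈ ℂ : Re z < −2ℓ} is forward invariant under f: if Re z < −2ℓ then Re(f(z)) < −2ℓ. -/
open Complex Filter

/-- The left half-plane `{Re z < -2ℓ}` is forward invariant under `f`. -/
theorem stmt_3 (ℓ : ℕ) (hℓ : 2 ≤ ℓ) (c : ℂ) (hc : ‖c - ℓ‖ < 1)
    (f : ℂ → ℂ)
    (hf : ∀ z : ℂ, f z = (c - ((ℓ : ℂ) - 1) * Complex.log c) + (ℓ : ℂ) * z - Complex.exp z) :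
    ∀ z : ℂ, z.re < -2 * ℓ → (f z).re < -2 * ℓ := by
  intro z hz
  have hL : (2:ℝ) ≤ (ℓ:ℝ) := by exact_mod_cast hℓ
  -- Re c < ℓ + 1
  have h1 : c.re < (ℓ:ℝ) + 1 := by
    have h := Complex.re_le_norm (c - (ℓ:ℂ))
    simp only [Complex.sub_re, Complex.natCast_re] at h
    linarith [lt_of_le_of_lt h hc]
  -- 1 ≤ |c|
  have h2 : (1:ℝ) ≤ ‖c‖ := by
    have htri : ‖(ℓ:ℂ)‖ ≤ ‖c‖ + ‖c - ℓ‖ := by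
      calc ‖(ℓ:ℂ)‖ = ‖c + ((ℓ:ℂ) - c)‖ := by ring_nf
        _ ≤ ‖c‖ + ‖(ℓ:ℂ) - c‖ := norm_add_le _ _
        _ = ‖c‖ + ‖c - ℓ‖ := by rw [norm_sub_rev]
    have habsℓ : ‖(ℓ:ℂ)‖ = (ℓ:ℝ) := by
      simp [Complex.norm_natCast]
    linarith
  have hlog : 0 ≤ Real.log (‖c‖) := Real.log_nonneg h2
  -- exp bound
  have hrz : z.re ≤ -4 := by linarith
  have hexp : Real.exp z.re ≤ 1/2 := by
    have : Real.exp z.re ≤ Real.exp (-4) := Real.exp_le_exp.mpr hrz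
    have h4 : (2:ℝ) ≤ Real.exp 4 := by
      have := Real.add_one_le_exp (4:ℝ)
      linarith
    have : Real.exp (-4) ≤ 1/2 := by
      rw [Real.exp_neg]
      rw [inv_le_comm₀ (Real.exp_pos 4) (by norm_num)]
      linarith
    linarith [Real.exp_le_exp.mpr hrz]
  have hexpre : -((Complex.exp z).re) ≤ Real.exp z.re := by
    have := Complex.abs_re_le_norm (Complex.exp z)
    rw [Complex.norm_exp] at this
    cases abs_le.mp this with
    | intro h _ => linarith
  -- compute re of f z
  rw [hf]
  simp only [Complex.sub_re, Complex.add_re, Complex.mul_re, Complex.natCast_re,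
    Complex.natCast_im, Complex.ofReal_re, Complex.one_re, Complex.one_im,
    Complex.log_re, Complex.log_im, Complex.sub_im, Complex.sub_re]
  have hlz : (ℓ:ℝ) * z.re < (ℓ:ℝ) * (-2 * ℓ) := by
    apply mul_lt_mul_of_pos_left hz (by linarith)
  have hlognn : 0 ≤ ((ℓ:ℝ) - 1) * Real.log (‖c‖) :=
    mul_nonneg (by linarith) hlog
  nlinarith [hlz, hexpre, hexp, hlognn, h1, hL, sq_nonneg ((ℓ:ℝ) - 2)]
end

section
/- For every z ∈ ℂ with Re z < −2ℓ, the series Σ_{j=0}^{∞} ℓ^{−j−1}·exp(f^j(z)) converges absolutely, and the normalized iterates h_n(z) = f^n(z)/ℓ^n converge as n → ∞ with limit lim_{n→∞} f^n(z)/ℓ^n = λ/(ℓ−1) + z − Σ_{j=0}^{∞} ℓ^{−j−1}·exp(f^j(z)). -/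
open Complex Filter Topology

/-- For `Re z < -2ℓ`, the series `∑_j ℓ^{-j-1} exp (f^[j] z)` converges absolutely and
`f^[n] z / ℓ^n → λ/(ℓ-1) + z - ∑_{j=0}^∞ ℓ^{-j-1} exp (f^[j] z)`. -/
theorem stmt_5 (ℓ : ℕ) (hℓ : 2 ≤ ℓ) (c : ℂ) (hc : ‖c - ℓ‖ < 1)
    (f : ℂ → ℂ)
    (hf : ∀ z : ℂ, f z = (c - ((ℓ : ℂ) - 1) * Complex.log c) + (ℓ : ℂ) * z - Complex.exp z) :
    ∀ z : ℂ, z.re < -2 * ℓ →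
      Summable (fun j : ℕ => ‖((ℓ : ℂ) ^ (j + 1))⁻¹ * Complex.exp (f^[j] z)‖) ∧
      Tendsto (fun n : ℕ => f^[n] z / (ℓ : ℂ) ^ n) atTop
        (𝓝 ((c - ((ℓ : ℂ) - 1) * Complex.log c) / ((ℓ : ℂ) - 1) + z
          - ∑' j : ℕ, ((ℓ : ℂ) ^ (j + 1))⁻¹ * Complex.exp (f^[j] z))) := by
  intro z hz
  set lam : ℂ := c - ((ℓ : ℂ) - 1) * Complex.log c with hlam
  have hℓR : (2:ℝ) ≤ (ℓ:ℝ) := by exact_mod_cast hℓ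
  have hℓ0 : (0:ℝ) < (ℓ:ℝ) := by linarith
  have hℓC : (ℓ:ℂ) ≠ 0 := by exact_mod_cast (by positivity : (ℓ:ℝ) ≠ 0)
  -- bound on Re lam
  have hcre : c.re < (ℓ:ℝ) + 1 := by
    have := Complex.abs_re_le_norm (c - (ℓ:ℂ))
    simp only [Complex.sub_re, Complex.natCast_re] at this
    have := abs_lt.mp (lt_of_le_of_lt this hc)
    linarith [this.2]
  have hcre' : (ℓ:ℝ) - 1 < c.re := by
    have := Complex.abs_re_le_norm (c - (ℓ:ℂ))
    simp only [Complex.sub_re, Complex.natCast_re] at this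
    have := abs_lt.mp (lt_of_le_of_lt this hc)
    linarith [this.1]
  have hlogre : 0 ≤ (Complex.log c).re := by
    rw [Complex.log_re]
    have h1 : (1:ℝ) ≤ ‖c‖ := by
      have := Complex.abs_re_le_norm c
      calc (1:ℝ) ≤ c.re := by linarith
        _ ≤ |c.re| := le_abs_self _
        _ ≤ ‖c‖ := this
    exact Real.log_nonneg h1
  have hlamre : lam.re < (ℓ:ℝ) + 1 := by
    have : lam.re = c.re - ((ℓ:ℝ) - 1) * (Complex.log c).re := by
      simp [hlam, Complex.sub_re, Complex.mul_re, Complex.sub_im,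
        Complex.natCast_re, Complex.natCast_im, Complex.one_re, Complex.one_im]
    rw [this]
    nlinarith [hlogre, hcre]
  -- invariance of the half-plane
  have hinv : ∀ w : ℂ, w.re < -2 * ℓ → (f w).re < -2 * ℓ := by
    intro w hw
    rw [hf w]
    have hre : (lam + (ℓ:ℂ) * w - Complex.exp w).re
        = lam.re + (ℓ:ℝ) * w.re - (Complex.exp w).re := by
      simp [Complex.add_re, Complex.sub_re, Complex.mul_re, Complex.natCast_re,
        Complex.natCast_im]
    rw [hre]
    have hexp : |(Complex.exp w).re| ≤ 1 := by
      have h1 : |(Complex.exp w).re| ≤ ‖Complex.exp w‖ :=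
        Complex.abs_re_le_norm _
      rw [Complex.norm_exp] at h1
      have : Real.exp w.re ≤ 1 := by
        rw [Real.exp_le_one_iff]
        nlinarith
      linarith
    have h2 : -1 ≤ (Complex.exp w).re := by
      have := abs_le.mp hexp; linarith [this.1]
    nlinarith
  have hiter : ∀ n : ℕ, (f^[n] z).re < -2 * ℓ := by
    intro n
    induction n with
    | zero => simpa using hz
    | succ n ih => rw [Function.iterate_succ_apply']; exact hinv _ ih
  -- norm bound
  have hbound : ∀ j : ℕ, ‖((ℓ : ℂ) ^ (j + 1))⁻¹ * Complex.exp (f^[j] z)‖ ≤ ((ℓ:ℝ)⁻¹) ^ (j + 1) := by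
    intro j
    rw [norm_mul, norm_inv, norm_pow, Complex.norm_natCast, Complex.norm_exp]
    have hexp : Real.exp (f^[j] z).re ≤ 1 := by
      rw [Real.exp_le_one_iff]
      have := hiter j
      nlinarith
    calc ((ℓ:ℝ) ^ (j+1))⁻¹ * Real.exp (f^[j] z).re ≤ ((ℓ:ℝ) ^ (j+1))⁻¹ * 1 := by
          apply mul_le_mul_of_nonneg_left hexp; positivity
      _ = ((ℓ:ℝ)⁻¹) ^ (j+1) := by rw [mul_one, inv_pow]
  have hgeo : Summable (fun j : ℕ => ((ℓ:ℝ)⁻¹) ^ (j + 1)) := by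
    apply Summable.comp_injective (summable_geometric_of_lt_one (by positivity)
      (by rw [inv_lt_one_iff₀]; right; linarith)) (add_left_injective 1)
  have hsumnorm : Summable (fun j : ℕ => ‖((ℓ : ℂ) ^ (j + 1))⁻¹ * Complex.exp (f^[j] z)‖) :=
    Summable.of_nonneg_of_le (fun j => norm_nonneg _) hbound hgeo
  have hsum : Summable (fun j : ℕ => ((ℓ : ℂ) ^ (j + 1))⁻¹ * Complex.exp (f^[j] z)) :=
    Summable.of_norm hsumnorm
  refine ⟨hsumnorm, ?_⟩
  -- explicit formula for the normalized iterates
  have hform : ∀ n : ℕ, f^[n] z / (ℓ:ℂ) ^ n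
      = z + lam * (∑ j ∈ Finset.range n, ((ℓ:ℂ) ^ (j+1))⁻¹)
        - ∑ j ∈ Finset.range n, ((ℓ:ℂ) ^ (j+1))⁻¹ * Complex.exp (f^[j] z) := by
    intro n
    induction n with
    | zero => simp
    | succ n ih =>
      rw [Function.iterate_succ_apply', hf, Finset.sum_range_succ, Finset.sum_range_succ]
      have hpow : ((ℓ:ℂ) ^ (n+1)) ≠ 0 := pow_ne_zero _ hℓC
      have hpow' : ((ℓ:ℂ) ^ n) ≠ 0 := pow_ne_zero _ hℓC
      have hx : f^[n] z = (ℓ:ℂ) ^ n *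
          (z + lam * (∑ j ∈ Finset.range n, ((ℓ:ℂ) ^ (j+1))⁻¹)
            - ∑ j ∈ Finset.range n, ((ℓ:ℂ) ^ (j+1))⁻¹ * Complex.exp (f^[j] z)) := by
        rw [← ih]; field_simp
      rw [hx]
      field_simp
      ring
  -- limits
  have hinvnorm : ‖(ℓ:ℂ)⁻¹‖ < 1 := by
    rw [norm_inv, Complex.norm_natCast, inv_lt_one_iff₀]; right; linarith
  have hG : Tendsto (fun n : ℕ => ∑ j ∈ Finset.range n, ((ℓ:ℂ) ^ (j+1))⁻¹) atTop
      (𝓝 (((ℓ:ℂ) - 1)⁻¹)) := by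
    have hsg : Summable (fun j : ℕ => ((ℓ:ℂ) ^ (j+1))⁻¹) := by
      apply Summable.of_norm
      apply Summable.of_nonneg_of_le (fun j => norm_nonneg _) _ hgeo
      intro j
      rw [norm_inv, norm_pow, Complex.norm_natCast, inv_pow]
    have hval : ∑' j : ℕ, ((ℓ:ℂ) ^ (j+1))⁻¹ = ((ℓ:ℂ) - 1)⁻¹ := by
      have h1 : ∀ j : ℕ, ((ℓ:ℂ) ^ (j+1))⁻¹ = (ℓ:ℂ)⁻¹ * ((ℓ:ℂ)⁻¹) ^ j := by
        intro j; rw [← inv_pow, pow_succ, mul_comm]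
      simp_rw [h1]
      rw [tsum_mul_left, tsum_geometric_of_norm_lt_one hinvnorm]
      have h2 : (1 : ℂ) - (ℓ:ℂ)⁻¹ ≠ 0 := by
        intro h
        have : (ℓ:ℂ)⁻¹ = 1 := by linear_combination -h
        have : (ℓ:ℂ) = 1 := by
          field_simp at this; exact this.symm
        have : (ℓ:ℝ) = 1 := by exact_mod_cast this
        linarith
      field_simp
    rw [← hval]
    exact hsg.hasSum.tendsto_sum_nat
  have hS : Tendsto (fun n : ℕ => ∑ j ∈ Finset.range n, ((ℓ:ℂ) ^ (j+1))⁻¹ * Complex.exp (f^[j] z))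
      atTop (𝓝 (∑' j : ℕ, ((ℓ:ℂ) ^ (j+1))⁻¹ * Complex.exp (f^[j] z))) :=
    hsum.hasSum.tendsto_sum_nat
  have hfinal : Tendsto (fun n : ℕ => z + lam * (∑ j ∈ Finset.range n, ((ℓ:ℂ) ^ (j+1))⁻¹)
        - ∑ j ∈ Finset.range n, ((ℓ:ℂ) ^ (j+1))⁻¹ * Complex.exp (f^[j] z)) atTop
      (𝓝 (z + lam * ((ℓ:ℂ) - 1)⁻¹ - ∑' j : ℕ, ((ℓ:ℂ) ^ (j+1))⁻¹ * Complex.exp (f^[j] z))) :=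
    ((tendsto_const_nhds.add (hG.const_mul lam)).sub hS)
  have heq : z + lam * ((ℓ:ℂ) - 1)⁻¹ - ∑' j : ℕ, ((ℓ:ℂ) ^ (j+1))⁻¹ * Complex.exp (f^[j] z)
      = lam / ((ℓ:ℂ) - 1) + z - ∑' j : ℕ, ((ℓ:ℂ) ^ (j+1))⁻¹ * Complex.exp (f^[j] z) := by
    rw [div_eq_mul_inv]; ring
  rw [← heq]
  exact hfinal.congr (fun n => (hform n).symm)
end

section
/- For every z ∈ ℂ with Re z < −2ℓ, the orbit of z under f escapes to infinity inside the Baker domain: Re(f^n(z)) → −∞ and |f^n(z)| → ∞ as n → ∞. -/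
open Complex Filter Topology

/-- For `Re z < -2ℓ`, the orbit of `z` escapes: `Re (f^[n] z) → -∞` and `|f^[n] z| → ∞`. -/
theorem stmt_6 (ℓ : ℕ) (hℓ : 2 ≤ ℓ) (c : ℂ) (hc : ‖c - ℓ‖ < 1)
    (f : ℂ → ℂ)
    (hf : ∀ z : ℂ, f z = (c - ((ℓ : ℂ) - 1) * Complex.log c) + (ℓ : ℂ) * z - Complex.exp z) :
    ∀ z : ℂ, z.re < -2 * ℓ →
      Tendsto (fun n : ℕ => (f^[n] z).re) atTop atBot ∧
      Tendsto (fun n : ℕ => ‖f^[n] z‖) atTop atTop := by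
  intro z hz
  have hL : (2:ℝ) ≤ (ℓ:ℝ) := by exact_mod_cast hℓ
  -- |c| ≥ 1
  have habsc : 1 ≤ ‖c‖ := by
    have h1 : ‖(ℓ:ℂ)‖ ≤ ‖c‖ + ‖(ℓ:ℂ) - c‖ := by
      have := norm_add_le c ((ℓ:ℂ) - c)
      simpa using this
    have h2 : ‖(ℓ:ℂ) - c‖ = ‖c - ℓ‖ := by
      rw [← norm_neg]; ring_nf
    have h3 : ‖(ℓ:ℂ)‖ = (ℓ:ℝ) := by
      simp [Complex.norm_natCast]
    rw [h2, h3] at h1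
    linarith
  -- Re c < ℓ + 1
  have hcre : c.re ≤ (ℓ:ℝ) + 1 := by
    have h1 : |(c - (ℓ:ℂ)).re| ≤ ‖c - ℓ‖ := Complex.abs_re_le_norm _
    have h2 : (c - (ℓ:ℂ)).re = c.re - ℓ := by simp
    rw [h2] at h1
    have := abs_le.mp (le_of_lt (lt_of_le_of_lt h1 hc))
    linarith [this.2]
  -- Re λ ≤ ℓ + 1
  have hlam : (c - ((ℓ:ℂ) - 1) * Complex.log c).re ≤ (ℓ:ℝ) + 1 := by
    have h1 : ((((ℓ:ℂ) - 1)) * Complex.log c).re = ((ℓ:ℝ) - 1) * Real.log ‖c‖ := by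
      simp [Complex.mul_re, Complex.log_re, Complex.log_im]
    have h2 : 0 ≤ Real.log ‖c‖ := Real.log_nonneg habsc
    have h3 : 0 ≤ ((ℓ:ℝ) - 1) * Real.log ‖c‖ :=
      mul_nonneg (by linarith) h2
    rw [Complex.sub_re, h1]
    linarith
  -- key step
  have key : ∀ w : ℂ, w.re < -2 * ℓ → (f w).re ≤ w.re - 1/2 := by
    intro w hw
    have hre : (f w).re = (c - ((ℓ:ℂ) - 1) * Complex.log c).re + (ℓ:ℝ) * w.re - (Complex.exp w).re := by
      rw [hf]
      simp [Complex.add_re, Complex.sub_re, Complex.mul_re]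
    have hexp : -(Complex.exp w).re ≤ Real.exp w.re := by
      have h1 : |(Complex.exp w).re| ≤ ‖Complex.exp w‖ := Complex.abs_re_le_norm _
      rw [Complex.norm_exp] at h1
      have := neg_abs_le (Complex.exp w).re
      linarith
    have hexp2 : Real.exp w.re ≤ 1/4 := by
      have h4 : w.re ≤ -4 := by linarith
      have h5 : Real.exp w.re ≤ Real.exp (-4) := Real.exp_le_exp.mpr h4
      have h6 : (5:ℝ) ≤ Real.exp 4 := by
        have := Real.add_one_le_exp (4:ℝ)
        linarith
      have h7 : Real.exp (-4) = (Real.exp 4)⁻¹ := by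
        rw [Real.exp_neg]
      have h8 : (Real.exp 4)⁻¹ ≤ 1/5 := by
        rw [inv_le_comm₀ (by linarith) (by norm_num)]; linarith
      linarith
    have hprod : 0 ≤ ((ℓ:ℝ) - 1) * (-2 * ℓ - w.re) :=
      mul_nonneg (by linarith) (by linarith)
    rw [hre]
    nlinarith [hprod]
  -- orbit bound by induction
  have orbit : ∀ n : ℕ, (f^[n] z).re ≤ z.re - n/2 ∧ (f^[n] z).re < -2 * ℓ := by
    intro n
    induction n with
    | zero => exact ⟨by simp, by simpa using hz⟩
    | succ n ih =>
      rw [Function.iterate_succ_apply']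
      have h1 := key _ ih.2
      constructor
      · push_cast
        linarith [ih.1]
      · have : (0:ℝ) ≤ n := Nat.cast_nonneg n
        linarith [ih.1]
  have hre_bot : Tendsto (fun n : ℕ => (f^[n] z).re) atTop atBot := by
    have h1 : Tendsto (fun n : ℕ => z.re - (n:ℝ)/2) atTop atBot := by
      apply tendsto_atBot_add_const_left
      apply tendsto_neg_atTop_atBot.comp
      exact (tendsto_natCast_atTop_atTop (R := ℝ)).atTop_div_const (by norm_num)
    exact tendsto_atBot_mono (fun n => (orbit n).1) h1
  refine ⟨hre_bot, ?_⟩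
  have h2 : Tendsto (fun n : ℕ => -(f^[n] z).re) atTop atTop := tendsto_neg_atBot_atTop.comp hre_bot
  apply tendsto_atTop_mono _ h2
  intro n
  have := Complex.abs_re_le_norm (f^[n] z)
  have := neg_abs_le (f^[n] z).re
  linarith
end

section
/- Let z', w ∈ ℂ with 0 ≤ Im z' ≤ 2π and 0 ≤ Im w ≤ 2π, and let k ∈ ℤ satisfy f(z') = w + 2πik. If π|k| ≥ 3πℓ + |Im λ|, then |f'(z')| ≥ π·|k − ℓ|, where f'(z') = ℓ − e^{z'}. -/
open Complex Filter

/-- If `z', w` lie in the closed strip `0 ≤ Im ≤ 2π`, `f z' = w + 2πik`, and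
`π|k| ≥ 3πℓ + |Im λ|`, then `|f'(z')| = |ℓ - e^{z'}| ≥ π |k - ℓ|`. -/
theorem stmt_11 (ℓ : ℕ) (hℓ : 2 ≤ ℓ) (c : ℂ) (hc : ‖c - ℓ‖ < 1)
    (f : ℂ → ℂ)
    (hf : ∀ z : ℂ, f z = (c - ((ℓ : ℂ) - 1) * Complex.log c) + (ℓ : ℂ) * z - Complex.exp z)
    (z' w : ℂ) (hz'₁ : 0 ≤ z'.im) (hz'₂ : z'.im ≤ 2 * Real.pi)
    (hw₁ : 0 ≤ w.im) (hw₂ : w.im ≤ 2 * Real.pi)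
    (k : ℤ) (hk : f z' = w + 2 * Real.pi * Complex.I * k)
    (hbig : Real.pi * |(k : ℝ)| ≥
      3 * Real.pi * ℓ + |(c - ((ℓ : ℂ) - 1) * Complex.log c).im|) :
    ‖(ℓ : ℂ) - Complex.exp z'‖ ≥ Real.pi * |(k : ℝ) - ℓ| := by
  set a : ℝ := (c - ((ℓ : ℂ) - 1) * Complex.log c).im with ha
  have hpi := Real.pi_pos
  have hla : a ≤ |a| := le_abs_self a
  have hla' : -|a| ≤ a := neg_abs_le a
  have hℓR : (2 : ℝ) ≤ (ℓ : ℝ) := by exact_mod_cast hℓ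
  -- imaginary part of the equation
  have him : (Complex.exp z').im = a + (ℓ : ℝ) * z'.im - w.im - 2 * Real.pi * k := by
    have h := congrArg Complex.im hk
    rw [hf] at h
    simp only [Complex.add_im, Complex.sub_im, Complex.sub_re, Complex.mul_im, Complex.mul_re,
      Complex.natCast_re, Complex.natCast_im, Complex.ofReal_re, Complex.ofReal_im,
      Complex.I_re, Complex.I_im, Complex.intCast_re, Complex.intCast_im,
      Complex.one_re, Complex.one_im, Complex.re_ofNat, Complex.im_ofNat] at h
    have ha' : a = c.im - ((ℓ : ℝ) - 1) * (Complex.log c).im := by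
      simp [ha, Complex.sub_im, Complex.mul_im]
    linarith
  have h1 : |(Complex.exp z').im| ≤ ‖(ℓ : ℂ) - Complex.exp z'‖ := by
    have := Complex.abs_im_le_norm ((ℓ : ℂ) - Complex.exp z')
    simpa using this
  have htri : |(k : ℝ) - ℓ| ≤ |(k : ℝ)| + (ℓ : ℝ) := by
    calc |(k : ℝ) - ℓ| ≤ |(k : ℝ)| + |(ℓ : ℝ)| := abs_sub _ _
    _ = |(k : ℝ)| + (ℓ : ℝ) := by rw [Nat.abs_cast]
  have hup : (ℓ : ℝ) * z'.im ≤ (ℓ : ℝ) * (2 * Real.pi) :=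
    mul_le_mul_of_nonneg_left hz'₂ (by positivity)
  have hlo : 0 ≤ (ℓ : ℝ) * z'.im := mul_nonneg (by positivity) hz'₁
  have key : Real.pi * (|(k : ℝ)| + ℓ) ≤ |(Complex.exp z').im| := by
    rw [him]
    rcases le_or_gt 0 (k : ℝ) with h0 | h0
    · rw [_root_.abs_of_nonneg h0] at hbig
      have : a + (ℓ : ℝ) * z'.im - w.im - 2 * Real.pi * k ≤
          -(Real.pi * ((k : ℝ) + ℓ)) := by nlinarith
      calc Real.pi * (|(k : ℝ)| + ℓ) = Real.pi * ((k : ℝ) + ℓ) := by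
            rw [_root_.abs_of_nonneg h0]
        _ ≤ -(a + (ℓ : ℝ) * z'.im - w.im - 2 * Real.pi * k) := by linarith
        _ ≤ |a + (ℓ : ℝ) * z'.im - w.im - 2 * Real.pi * k| := neg_le_abs _
    · rw [_root_.abs_of_neg h0] at hbig
      have : Real.pi * (-(k : ℝ) + ℓ) ≤
          a + (ℓ : ℝ) * z'.im - w.im - 2 * Real.pi * k := by nlinarith
      calc Real.pi * (|(k : ℝ)| + ℓ) = Real.pi * (-(k : ℝ) + ℓ) := by
            rw [_root_.abs_of_neg h0]
        _ ≤ a + (ℓ : ℝ) * z'.im - w.im - 2 * Real.pi * k := this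
        _ ≤ |a + (ℓ : ℝ) * z'.im - w.im - 2 * Real.pi * k| := le_abs_self _
  have : Real.pi * |(k : ℝ) - ℓ| ≤ Real.pi * (|(k : ℝ)| + ℓ) :=
    mul_le_mul_of_nonneg_left htri hpi.le
  linarith
end

section
/- For every real t > 1 and every w ∈ ℂ, the transfer-operator sum over the fiber is finite: the family (|f'(g(w + 2πik))|^{−t})_{k ∈ ℤ} is summable, i.e. Σ_{k ∈ ℤ} |ℓ − e^{g(w + 2πik)}|^{−t} < ∞. (Each term is well defined since f'(z) = ℓ − e^z never vanishes on P.) -/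
open Complex Filter

/-- For `t > 1` and every `w ∈ ℂ`, the transfer-operator sum over the fiber is finite:
the family `k ↦ |ℓ - e^{g(w + 2πik)}|^{-t}` is summable over `k ∈ ℤ`. -/
theorem stmt_12 (ℓ : ℕ) (hℓ : 2 ≤ ℓ) (c : ℂ) (hc : ‖c - ℓ‖ < 1)
    (f : ℂ → ℂ)
    (hf : ∀ z : ℂ, f z = (c - ((ℓ : ℂ) - 1) * Complex.log c) + (ℓ : ℂ) * z - Complex.exp z)
    (g : ℂ → ℂ)
    (hg : ∀ w : ℂ, (0 < (g w).im ∧ (g w).im < 2 * Real.pi) ∧ f (g w) = w)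
    (t : ℝ) (ht : 1 < t) :
    ∀ w : ℂ,
      Summable (fun k : ℤ =>
        ‖(ℓ : ℂ) - Complex.exp (g (w + 2 * Real.pi * Complex.I * k))‖ ^ (-t)) := by
  intro w
  set lam : ℂ := c - ((ℓ : ℂ) - 1) * Complex.log c with hlam
  set C : ℝ := |lam.im| + ℓ * (2 * Real.pi) + |w.im| with hC
  have hπ : (0:ℝ) < Real.pi := Real.pi_pos
  -- key lower bound
  have key : ∀ k : ℤ, 2 * Real.pi * |(k:ℝ)| - C ≤
      ‖(ℓ : ℂ) - Complex.exp (g (w + 2 * Real.pi * Complex.I * k))‖ := by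
    intro k
    set z := g (w + 2 * Real.pi * Complex.I * k) with hz
    obtain ⟨⟨him0, him2⟩, hfz⟩ := hg (w + 2 * Real.pi * Complex.I * k)
    rw [hf] at hfz
    have heq : Complex.exp z = lam + (ℓ:ℂ) * z - w - 2 * Real.pi * Complex.I * k := by
      linear_combination -hfz
    have him : (Complex.exp z).im = lam.im + ℓ * z.im - w.im - 2 * Real.pi * k := by
      have := congrArg Complex.im heq
      simpa using this
    have h1 : |(Complex.exp z).im| ≤ ‖(ℓ : ℂ) - Complex.exp z‖ := by
      have := Complex.abs_im_le_norm ((ℓ : ℂ) - Complex.exp z)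
      simpa using this
    refine le_trans ?_ h1
    rw [him]
    have h2 : |lam.im + ℓ * z.im - w.im| ≤ C := by
      have hzim : |(ℓ:ℝ) * z.im| ≤ ℓ * (2 * Real.pi) := by
        rw [abs_mul, _root_.abs_of_nonneg (by positivity : (0:ℝ) ≤ (ℓ:ℝ)),
          _root_.abs_of_pos him0]
        have := him2.le
        nlinarith [Nat.cast_nonneg (α := ℝ) ℓ]
      calc |lam.im + ℓ * z.im - w.im| ≤ |lam.im| + |(ℓ:ℝ) * z.im| + |w.im| := by
            exact (abs_sub _ _).trans (by gcongr; exact abs_add_le _ _)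
        _ ≤ C := by rw [hC]; linarith
    have h3 : 2 * Real.pi * |(k:ℝ)| - |lam.im + ℓ * z.im - w.im| ≤
        |lam.im + ℓ * z.im - w.im - 2 * Real.pi * k| :=
      calc 2 * Real.pi * |(k:ℝ)| - |lam.im + ℓ * z.im - w.im|
          = |2 * Real.pi * (k:ℝ)| - |lam.im + ℓ * z.im - w.im| := by
            rw [abs_mul, _root_.abs_of_pos (by positivity : (0:ℝ) < 2 * Real.pi)]
        _ ≤ |2 * Real.pi * (k:ℝ) - (lam.im + ℓ * z.im - w.im)| :=
            abs_sub_abs_le_abs_sub _ _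
        _ = |lam.im + ℓ * z.im - w.im - 2 * Real.pi * k| := abs_sub_comm _ _
    linarith
  -- comparison
  refine summable_of_isBigO (Real.summable_abs_int_rpow ht) ?_
  apply Asymptotics.IsBigO.of_bound (Real.pi ^ (-t))
  have hfin : {k : ℤ | ¬ (max C 1 ≤ Real.pi * |(k:ℝ)|)}.Finite := by
    apply Set.Finite.subset (Set.finite_Icc (-(⌈max C 1 / Real.pi⌉)) ⌈max C 1 / Real.pi⌉)
    intro k hk
    simp only [Set.mem_setOf_eq, not_le] at hk
    have hk' : |(k:ℝ)| < max C 1 / Real.pi := by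
      rw [lt_div_iff₀ hπ]; linarith [hk]
    have : |(k:ℝ)| ≤ (⌈max C 1 / Real.pi⌉ : ℝ) := hk'.le.trans (Int.le_ceil _)
    rw [← Int.cast_abs] at this
    have : |k| ≤ ⌈max C 1 / Real.pi⌉ := by exact_mod_cast this
    constructor <;> [linarith [neg_abs_le k]; linarith [le_abs_self k]]
  rw [eventually_cofinite]
  refine hfin.subset ?_
  intro k hk
  simp only [Set.mem_setOf_eq, not_le] at hk ⊢
  by_contra hcon
  push_neg at hcon
  have hle : max C 1 ≤ Real.pi * |(k:ℝ)| := by simpa using hcon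
  apply hk.not_ge
  set A := ‖(ℓ : ℂ) - Complex.exp (g (w + 2 * Real.pi * Complex.I * k))‖ with hA
  have hCk : C ≤ Real.pi * |(k:ℝ)| := le_trans (le_max_left _ _) hle
  have h1k : (1:ℝ) ≤ Real.pi * |(k:ℝ)| := le_trans (le_max_right _ _) hle
  have hAk : Real.pi * |(k:ℝ)| ≤ A := by
    have := key k; linarith
  have hApos : (0:ℝ) < A := lt_of_lt_of_le (by linarith) hAk
  have hterm : A ^ (-t) ≤ (Real.pi * |(k:ℝ)|) ^ (-t) := by
    rw [Real.rpow_neg hApos.le, Real.rpow_neg (by positivity)]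
    apply inv_anti₀ (by positivity)
    exact Real.rpow_le_rpow (by positivity) hAk (by linarith)
  have hsplit : (Real.pi * |(k:ℝ)|) ^ (-t) = Real.pi ^ (-t) * |(k:ℝ)| ^ (-t) :=
    Real.mul_rpow hπ.le (abs_nonneg _)
  calc ‖A ^ (-t)‖ = A ^ (-t) := by
        rw [Real.norm_eq_abs, _root_.abs_of_nonneg (Real.rpow_nonneg hApos.le _)]
    _ ≤ Real.pi ^ (-t) * |(k:ℝ)| ^ (-t) := by rw [← hsplit]; exact hterm
    _ ≤ Real.pi ^ (-t) * ‖|(k:ℝ)| ^ (-t)‖ := by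
        rw [Real.norm_eq_abs, _root_.abs_of_nonneg (Real.rpow_nonneg (abs_nonneg _) _)]
end

section
/- There exists M₀ > 0 such that for every M ≥ M₀ and every z ∈ ℂ with 0 ≤ Im z ≤ 2π, Re z ≥ M and |Re(f(z))| ≤ M, one has |Im(f(z))| ≥ e^M/2. -/
open Complex Filter

/-- There is `M₀ > 0` such that for `M ≥ M₀` and `z` in the closed strip with
`Re z ≥ M` and `|Re (f z)| ≤ M`, one has `|Im (f z)| ≥ e^M / 2`. -/
theorem stmt_14 (ℓ : ℕ) (hℓ : 2 ≤ ℓ) (c : ℂ) (hc : ‖c - ℓ‖ < 1)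
    (f : ℂ → ℂ)
    (hf : ∀ z : ℂ, f z = (c - ((ℓ : ℂ) - 1) * Complex.log c) + (ℓ : ℂ) * z - Complex.exp z) :
    ∃ M₀ > (0 : ℝ), ∀ M ≥ M₀, ∀ z : ℂ,
      0 ≤ z.im → z.im ≤ 2 * Real.pi → M ≤ z.re → |(f z).re| ≤ M →
      Real.exp M / 2 ≤ |(f z).im| := by
  set lam : ℂ := c - ((ℓ : ℂ) - 1) * Complex.log c with hlam
  set C : ℝ := ‖lam‖ + 2 * Real.pi * ℓ with hCdef
  have hC0 : 0 ≤ C := by positivity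
  have htend : Tendsto (fun x : ℝ => Real.exp x / x) atTop atTop := by
    simpa using Real.tendsto_exp_div_pow_atTop 1
  obtain ⟨a, ha⟩ := (Filter.tendsto_atTop.mp htend (2 * (C + ℓ + 1))).exists_forall_of_atTop
  refine ⟨max a 1, lt_of_lt_of_le one_pos (le_max_right _ _), ?_⟩
  have key : ∀ x : ℝ, max a 1 ≤ x → C + (ℓ + 1) * x ≤ Real.exp x / 2 := by
    intro x hx
    have hx1 : (1 : ℝ) ≤ x := le_trans (le_max_right a 1) hx
    have hxa : a ≤ x := le_trans (le_max_left a 1) hx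
    have h0 : (0 : ℝ) < x := lt_of_lt_of_le one_pos hx1
    have h1 : 2 * (C + ℓ + 1) ≤ Real.exp x / x := ha x hxa
    have h2 : 2 * (C + ℓ + 1) * x ≤ Real.exp x := by
      calc 2 * (C + ℓ + 1) * x ≤ Real.exp x / x * x := by
            exact mul_le_mul_of_nonneg_right h1 h0.le
        _ = Real.exp x := div_mul_cancel₀ _ h0.ne'
    nlinarith [hC0]
  intro M hM z him0 him2 hre hfre
  have hx1 : (1 : ℝ) ≤ z.re := le_trans (le_trans (le_max_right a 1) hM) hre
  have hexp : Complex.exp z = lam + (ℓ : ℂ) * z - f z := by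
    rw [hf z]; ring
  have habs : Real.exp z.re ≤ ‖lam‖ + ℓ * ‖z‖ + ‖f z‖ := by
    have := Complex.norm_exp z
    rw [hexp] at this
    rw [← this]
    calc ‖lam + (ℓ : ℂ) * z - f z‖
        ≤ ‖lam + (ℓ : ℂ) * z‖ + ‖f z‖ := norm_sub_le _ _
      _ ≤ ‖lam‖ + ‖(ℓ : ℂ) * z‖ + ‖f z‖ := by
          gcongr; exact norm_add_le _ _
      _ = ‖lam‖ + ℓ * ‖z‖ + ‖f z‖ := by
          rw [norm_mul, Complex.norm_natCast]
  have hzabs : ‖z‖ ≤ z.re + 2 * Real.pi := by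
    calc ‖z‖ ≤ |z.re| + |z.im| := Complex.norm_le_abs_re_add_abs_im z
      _ ≤ z.re + 2 * Real.pi := by
          rw [_root_.abs_of_nonneg (by linarith : (0:ℝ) ≤ z.re), _root_.abs_of_nonneg him0]; linarith
  have hfabs : ‖f z‖ ≤ M + |(f z).im| := by
    calc ‖f z‖ ≤ |(f z).re| + |(f z).im| := Complex.norm_le_abs_re_add_abs_im _
      _ ≤ M + |(f z).im| := by linarith
  have hMx : M ≤ z.re := hre
  have hkey := key z.re (le_trans hM hre)
  have h4 : Real.exp z.re ≤ C + (ℓ + 1) * z.re + |(f z).im| := by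
    have : Real.exp z.re ≤ ‖lam‖ + ℓ * (z.re + 2 * Real.pi) + (M + |(f z).im|) := by
      calc Real.exp z.re ≤ ‖lam‖ + ℓ * ‖z‖ + ‖f z‖ := habs
        _ ≤ ‖lam‖ + ℓ * (z.re + 2 * Real.pi) + (M + |(f z).im|) := by
            gcongr
    have hl0 : (0 : ℝ) ≤ (ℓ : ℝ) := Nat.cast_nonneg ℓ
    nlinarith
  have h5 : Real.exp z.re / 2 ≤ |(f z).im| := by linarith
  calc Real.exp M / 2 ≤ Real.exp z.re / 2 := by
        gcongr
    _ ≤ |(f z).im| := h5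
end

section
/- There exists R₀ ≥ 1 such that for every R ≥ R₀, every integer k with e^{2R} ≤ k ≤ e^{3R}, and every pair z, z' ∈ ℂ with R ≤ Re z ≤ 4R, 0 ≤ Im z ≤ 2π, R ≤ Re z' ≤ 4R, 0 ≤ Im z' ≤ 2π, and f(z') = z + 2πik, one has |f'(z')| ≤ 10k, where f'(z') = ℓ − e^{z'}. Equivalently, the contraction factor of the inverse branch satisfies |(F_k^{−1})'(z)| ≥ 1/(10k). -/
open Complex Filter

set_option maxHeartbeats 1000000 in
/-- There is `R₀ ≥ 1` such that for every `R ≥ R₀`, every integer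
`k ∈ [e^{2R}, e^{3R}]`, and every pair `z, z'` in the box
`R ≤ Re ≤ 4R`, `0 ≤ Im ≤ 2π` with `f z' = z + 2πik`, one has
`|f'(z')| = |ℓ - e^{z'}| ≤ 10 k`. -/
theorem stmt_17 (ℓ : ℕ) (hℓ : 2 ≤ ℓ) (c : ℂ) (hc : ‖c - ℓ‖ < 1)
    (f : ℂ → ℂ)
    (hf : ∀ z : ℂ, f z = (c - ((ℓ : ℂ) - 1) * Complex.log c) + (ℓ : ℂ) * z - Complex.exp z) :
    ∃ R₀ : ℝ, 1 ≤ R₀ ∧ ∀ R ≥ R₀,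
      ∀ k : ℤ, Real.exp (2 * R) ≤ (k : ℝ) → (k : ℝ) ≤ Real.exp (3 * R) →
      ∀ z z' : ℂ,
        R ≤ z.re → z.re ≤ 4 * R → 0 ≤ z.im → z.im ≤ 2 * Real.pi →
        R ≤ z'.re → z'.re ≤ 4 * R → 0 ≤ z'.im → z'.im ≤ 2 * Real.pi →
        f z' = z + 2 * Real.pi * Complex.I * k →
        ‖(ℓ : ℂ) - Complex.exp z'‖ ≤ 10 * (k : ℝ) := by
  set L : ℝ := ‖c - ((ℓ : ℂ) - 1) * Complex.log c‖ with hL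
  have hL0 : 0 ≤ L := norm_nonneg _
  have hπ : (0:ℝ) < Real.pi := Real.pi_pos
  have hπ' : Real.pi < 3.15 := Real.pi_lt_d2
  have hℓR : (2:ℝ) ≤ (ℓ:ℝ) := by exact_mod_cast hℓ
  refine ⟨L + ℓ + 2 * Real.pi * (ℓ + 1) + 4 * (ℓ + 1), by nlinarith, ?_⟩
  intro R hR k hk1 hk2 z z' hzre1 hzre2 hzim1 hzim2 hz're1 hz're2 hz'im1 hz'im2 heq
  have hR1 : (1:ℝ) ≤ R := by nlinarith
  have hk0 : (0:ℝ) < (k:ℝ) := lt_of_lt_of_le (Real.exp_pos _) hk1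
  -- exp z' = λ + ℓ z' - (z + 2πik)
  have he : Complex.exp z' = (c - ((ℓ : ℂ) - 1) * Complex.log c) + (ℓ : ℂ) * z'
      - (z + 2 * Real.pi * Complex.I * k) := by
    linear_combination hf z' - heq
  -- abs bounds for z and z'
  have habsz : ‖z‖ ≤ 4 * R + 2 * Real.pi := by
    refine (Complex.norm_le_abs_re_add_abs_im z).trans ?_
    rw [_root_.abs_of_nonneg (show (0:ℝ) ≤ z.re by linarith), _root_.abs_of_nonneg hzim1]
    linarith
  have habsz' : ‖z'‖ ≤ 4 * R + 2 * Real.pi := by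
    refine (Complex.norm_le_abs_re_add_abs_im z').trans ?_
    rw [_root_.abs_of_nonneg (show (0:ℝ) ≤ z'.re by linarith), _root_.abs_of_nonneg hz'im1]
    linarith
  have habsk : ‖2 * Real.pi * Complex.I * (k:ℂ)‖ = 2 * Real.pi * k := by
    rw [norm_mul, norm_mul, norm_mul, Complex.norm_I, Complex.norm_intCast, Complex.norm_two,
      Complex.norm_real, Real.norm_eq_abs, _root_.abs_of_pos hπ, _root_.abs_of_pos hk0, mul_one]
  have hexp : ‖Complex.exp z'‖
      ≤ L + ℓ * (4 * R + 2 * Real.pi) + (4 * R + 2 * Real.pi) + 2 * Real.pi * k := by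
    rw [he]
    refine (norm_sub_le _ _).trans ?_
    have h1 : ‖(c - ((ℓ : ℂ) - 1) * Complex.log c) + (ℓ : ℂ) * z'‖
        ≤ L + ℓ * (4 * R + 2 * Real.pi) := by
      refine (norm_add_le _ _).trans ?_
      rw [norm_mul, Complex.norm_natCast]
      have := mul_le_mul_of_nonneg_left habsz' (by positivity : (0:ℝ) ≤ (ℓ:ℝ))
      linarith
    have h2 : ‖z + 2 * Real.pi * Complex.I * k‖
        ≤ (4 * R + 2 * Real.pi) + 2 * Real.pi * k := by
      refine (norm_add_le _ _).trans ?_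
      rw [habsk]
      linarith
    linarith
  have hmain : ‖(ℓ : ℂ) - Complex.exp z'‖
      ≤ ℓ + (L + ℓ * (4 * R + 2 * Real.pi) + (4 * R + 2 * Real.pi) + 2 * Real.pi * k) := by
    refine (norm_sub_le _ _).trans ?_
    rw [Complex.norm_natCast]
    linarith
  -- lower bound on k
  have e1 : R + 1 ≤ Real.exp R := Real.add_one_le_exp R
  have e2 : Real.exp (2 * R) = Real.exp R * Real.exp R := by
    rw [← Real.exp_add]; ring_nf
  have hkbig : (R + 1) * (L + ℓ + 2 * Real.pi * (ℓ + 1) + 4 * (ℓ + 1) + 1) ≤ (k:ℝ) := by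
    have h3 : L + ℓ + 2 * Real.pi * (ℓ + 1) + 4 * (ℓ + 1) + 1 ≤ Real.exp R := by
      calc L + ℓ + 2 * Real.pi * (ℓ + 1) + 4 * (ℓ + 1) + 1 ≤ R + 1 := by linarith
        _ ≤ Real.exp R := e1
    calc (R + 1) * (L + ℓ + 2 * Real.pi * (ℓ + 1) + 4 * (ℓ + 1) + 1)
        ≤ Real.exp R * Real.exp R := by
          apply mul_le_mul e1 h3 (by positivity) (Real.exp_pos R).le
      _ = Real.exp (2 * R) := e2.symm
      _ ≤ (k:ℝ) := hk1
  refine hmain.trans ?_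
  have hB : (4:ℝ) * ((ℓ:ℝ) + 1) ≤ L + ℓ + 2 * Real.pi * (ℓ + 1) + 4 * (ℓ + 1) + 1 := by
    nlinarith
  have h4 : R * (4 * ((ℓ:ℝ) + 1)) ≤ R * (L + ℓ + 2 * Real.pi * (ℓ + 1) + 4 * (ℓ + 1) + 1) :=
    mul_le_mul_of_nonneg_left hB (by linarith)
  have h5 : 2 * Real.pi * (k:ℝ) ≤ 7 * (k:ℝ) := by nlinarith
  have h6 : (R + 1) * (L + ℓ + 2 * Real.pi * (ℓ + 1) + 4 * (ℓ + 1) + 1)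
      = R * (L + ℓ + 2 * Real.pi * (ℓ + 1) + 4 * (ℓ + 1) + 1)
        + (L + ℓ + 2 * Real.pi * (ℓ + 1) + 4 * (ℓ + 1) + 1) := by ring
  nlinarith [hkbig, h4, h5, h6]
end
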